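/- The principle M₁ ((A▷B) → ((◇A ∧ □□C) ▷ (B ∧ □C))) is valid on every ILM-frame and on every ILP-frame. -/
import Mathlib


inductive ILFormula : Type
  | bot : ILFormula
  | var : Nat → ILFormula
  | imp : ILFormula → ILFormula → ILFormula
  | box : ILFormula → ILFormula
  | rhd : ILFormula → ILFormula → ILFormula

namespace ILFormula

def neg (A : ILFormula) : ILFormula := imp A bot
def dia (A : ILFormula) : ILFormula := neg (box (neg A))
def or (A B : ILFormula) : ILFormula := imp (neg A) B
def and (A B : ILFormula) : ILFormula := neg (imp A (neg B))

end ILFormula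

/-- A propositional valuation: respects falsum and implication. -/
def IsPropValuation (v : ILFormula → Prop) : Prop :=
  ¬ v ILFormula.bot ∧ ∀ A B, v (ILFormula.imp A B) ↔ (v A → v B)

/-- A propositional tautology: true under every propositional valuation
(box- and rhd-formulas are treated as atoms). -/
def IsTaut (A : ILFormula) : Prop := ∀ v, IsPropValuation v → v A

/-- Provability in IL extended with an extra axiom set `Ax`. -/
inductive ILProvW (Ax : ILFormula → Prop) : ILFormula → Prop
  | ax {A : ILFormula} : Ax A → ILProvW Ax A
  | taut {A : ILFormula} : IsTaut A → ILProvW Ax A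
  | mp {A B : ILFormula} : ILProvW Ax (A.imp B) → ILProvW Ax A → ILProvW Ax B
  | nec {A : ILFormula} : ILProvW Ax A → ILProvW Ax A.box
  | L2 (A B : ILFormula) : ILProvW Ax (((A.imp B).box).imp ((A.box).imp (B.box)))
  | L3 (A : ILFormula) : ILProvW Ax ((A.box).imp (A.box.box))
  | L4 (A : ILFormula) : ILProvW Ax ((((A.box).imp A).box).imp A.box)
  | J1 (A B : ILFormula) : ILProvW Ax (((A.imp B).box).imp (A.rhd B))
  | J2 (A B C : ILFormula) : ILProvW Ax (((A.rhd B).and (B.rhd C)).imp (A.rhd C))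
  | J3 (A B C : ILFormula) : ILProvW Ax (((A.rhd C).and (B.rhd C)).imp ((A.or B).rhd C))
  | J4 (A B : ILFormula) : ILProvW Ax ((A.rhd B).imp ((A.dia).imp (B.dia)))
  | J5 (A : ILFormula) : ILProvW Ax ((A.dia).rhd A)

/-- Provability in the basic interpretability logic IL. -/
def ILProv : ILFormula → Prop := ILProvW (fun _ => False)
/-- No infinite ascending chain. -/
def ConverselyWellFounded {α : Type} (R : α → α → Prop) : Prop :=
  ¬ ∃ f : Nat → α, ∀ n, R (f n) (f (n + 1))

structure VeltmanFrame where
  W : Type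
  nonempty : Nonempty W
  R : W → W → Prop
  S : W → W → W → Prop
  R_trans : ∀ {x y z}, R x y → R y z → R x z
  R_cwf : ConverselyWellFounded R
  S_dom : ∀ {w x y}, S w x y → R w x ∧ R w y
  R_sub_S : ∀ {w x y}, R w x → R x y → S w x y
  S_refl : ∀ {w x}, R w x → S w x x
  S_trans : ∀ {w x y z}, S w x y → S w y z → S w x z

def forces (F : VeltmanFrame) (val : F.W → Nat → Prop) : F.W → ILFormula → Prop
  | _, ILFormula.bot => False
  | w, ILFormula.var n => val w n
  | w, ILFormula.imp A B => forces F val w A → forces F val w B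
  | w, ILFormula.box A => ∀ v, F.R w v → forces F val v A
  | w, ILFormula.rhd A B =>
      ∀ u, F.R w u → forces F val u A → ∃ v, F.S w u v ∧ forces F val v B

/-- A frame validates a formula if it is forced at every world under every
forcing relation. -/
def ValidOn (F : VeltmanFrame) (A : ILFormula) : Prop :=
  ∀ val w, forces F val w A

def ILMFrameCond (F : VeltmanFrame) : Prop :=
  ∀ x y z u : F.W, F.S x y z → F.R z u → F.R y u

def ILPFrameCond (F : VeltmanFrame) : Prop :=
  ∀ x y z u : F.W, F.R x y → F.R y z → F.S x z u → F.S y z u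

def M1Instance (A B C : ILFormula) : ILFormula :=
  (A.rhd B).imp (((A.dia).and (C.box.box)).rhd (B.and C.box))

lemma forces_and (F : VeltmanFrame) (val : F.W → Nat → Prop) (w : F.W) (A B : ILFormula) :
    forces F val w (A.and B) ↔ forces F val w A ∧ forces F val w B := by
  simp only [ILFormula.and, ILFormula.neg, forces]; tauto

lemma forces_dia (F : VeltmanFrame) (val : F.W → Nat → Prop) (w : F.W) (A : ILFormula) :
    forces F val w A.dia ↔ ∃ v, F.R w v ∧ forces F val v A := by
  simp only [ILFormula.dia, ILFormula.neg, forces]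
  constructor
  · intro h
    by_contra hc
    push_neg at hc
    exact h (fun v hv ha => hc v hv ha)
  · rintro ⟨v, hv, ha⟩ h
    exact h v hv ha

theorem stmt14 :
    (∀ F : VeltmanFrame, ILMFrameCond F →
      ∀ A B C : ILFormula, ValidOn F (M1Instance A B C)) ∧
    (∀ F : VeltmanFrame, ILPFrameCond F →
      ∀ A B C : ILFormula, ValidOn F (M1Instance A B C)) := by
  constructor
  · intro F hM A B C val w
    intro hAB u hwu hu
    rw [forces_and] at hu
    obtain ⟨hdia, hbb⟩ := hu
    rw [forces_dia] at hdia
    obtain ⟨u', huu', hA⟩ := hdia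
    obtain ⟨v, hSv, hB⟩ := hAB u' (F.R_trans hwu huu') hA
    refine ⟨v, F.S_trans (F.R_sub_S hwu huu') hSv, ?_⟩
    rw [forces_and]
    refine ⟨hB, fun t hvt => ?_⟩
    exact hbb u' huu' t (hM w u' v t hSv hvt)
  · intro F hP A B C val w
    intro hAB u hwu hu
    rw [forces_and] at hu
    obtain ⟨hdia, hbb⟩ := hu
    rw [forces_dia] at hdia
    obtain ⟨u', huu', hA⟩ := hdia
    obtain ⟨v, hSv, hB⟩ := hAB u' (F.R_trans hwu huu') hA
    have hSuv : F.S u u' v := hP w u u' v hwu huu' hSv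
    have huv : F.R u v := (F.S_dom hSuv).2
    refine ⟨v, F.R_sub_S hwu huv, ?_⟩
    rw [forces_and]
    exact ⟨hB, hbb v huv⟩
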